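/- Let g be a metric on an open set U ⊆ ℝ⁴ written in coordinates (u,x), and let S = u∂_u + x^i∂_i be the scaling vector field. Then for every smooth φ on U, □_g(Sφ) − S(□_gφ) = (∇_α R^{αβ} ∇_β)φ + (1/2)(4 + S(ln d)) □_gφ, where R = −d^{-1/2} L_S( d^{1/2} g⁻¹ − h ) − 2 d^{-1/2}( d^{1/2} g⁻¹ − h ) + R₁, and R₁ is the symmetric tensor whose only nonzero components are R₁^{iu} = R₁^{ui} = d^{-1/2} ω^i τ_x⁻². -/

import Mathlib

noncomputable section

/-- Points of the coordinate chart `ℝ⁴`. -/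
abbrev Pt : Type := Fin 4 → ℝ

/-- Coordinate partial derivative `∂_α f`. -/
def pd (α : Fin 4) (f : Pt → ℝ) (x : Pt) : ℝ :=
  fderiv ℝ f x (Pi.single α (1 : ℝ))

/-- `|g| = |det (g_{αβ})|`. -/
def adet (g : Pt → Matrix (Fin 4) (Fin 4) ℝ) (x : Pt) : ℝ := |(g x).det|

/-- Inverse metric `g^{αβ}`. -/
def ginv (g : Pt → Matrix (Fin 4) (Fin 4) ℝ) (x : Pt) : Matrix (Fin 4) (Fin 4) ℝ := (g x)⁻¹

/-- The wave operator `□_g φ = |g|^{-1/2} ∂_α(|g|^{1/2} g^{αβ} ∂_β φ)`. -/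
def boxg (g : Pt → Matrix (Fin 4) (Fin 4) ℝ) (φ : Pt → ℝ) (x : Pt) : ℝ :=
  (Real.sqrt (adet g x))⁻¹ *
    ∑ α : Fin 4, pd α (fun y => Real.sqrt (adet g y) * ∑ β : Fin 4, ginv g y α β * pd β φ y) x

/-- `X f = X^α ∂_α f`. -/
def Xapp (X : Fin 4 → Pt → ℝ) (f : Pt → ℝ) (x : Pt) : ℝ := ∑ γ : Fin 4, X γ x * pd γ f x

/-- A smooth symmetric everywhere-nondegenerate metric on `U`. -/
structure IsMetricOn (g : Pt → Matrix (Fin 4) (Fin 4) ℝ) (U : Set Pt) : Prop where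
  smooth : ∀ α β : Fin 4, ContDiffOn ℝ (⊤ : ℕ∞) (fun x => g x α β) U
  symm : ∀ x ∈ U, ∀ α β : Fin 4, g x α β = g x β α
  det_ne : ∀ x ∈ U, (g x).det ≠ 0

/-- Deformation tensor `π_{αβ} = (L_X g)_{αβ}` of `X` (lower indices). -/
def piLow (g : Pt → Matrix (Fin 4) (Fin 4) ℝ) (X : Fin 4 → Pt → ℝ) (x : Pt) (α β : Fin 4) : ℝ :=
  (∑ γ : Fin 4, X γ x * pd γ (fun y => g y α β) x)
    + (∑ γ : Fin 4, g x γ β * pd α (X γ) x) + (∑ γ : Fin 4, g x α γ * pd β (X γ) x)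

/-- Raised deformation tensor `π^{αβ}`. -/
def piUp (g : Pt → Matrix (Fin 4) (Fin 4) ℝ) (X : Fin 4 → Pt → ℝ) (x : Pt) (α β : Fin 4) : ℝ :=
  ∑ α' : Fin 4, ∑ β' : Fin 4, ginv g x α α' * ginv g x β β' * piLow g X x α' β'

/-- Normalized deformation tensor `π̂^{αβ} = π^{αβ} - (1/2) g^{αβ} (g_{γδ} π^{γδ})`. -/
def hatPi (g : Pt → Matrix (Fin 4) (Fin 4) ℝ) (X : Fin 4 → Pt → ℝ) (x : Pt) (α β : Fin 4) : ℝ :=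
  piUp g X x α β - (1/2) * ginv g x α β * (∑ γ : Fin 4, ∑ δ : Fin 4, g x γ δ * piUp g X x γ δ)

/-- Lie derivative of a contravariant 2-tensor:
`(L_X R)^{αβ} = X^γ∂_γR^{αβ} - R^{γβ}∂_γX^α - R^{αγ}∂_γX^β`. -/
def lieT (X : Fin 4 → Pt → ℝ) (R : Pt → Fin 4 → Fin 4 → ℝ) (x : Pt) (α β : Fin 4) : ℝ :=
  (∑ γ : Fin 4, X γ x * pd γ (fun y => R y α β) x)
    - (∑ γ : Fin 4, R x γ β * pd γ (X α) x)
    - (∑ γ : Fin 4, R x α γ * pd γ (X β) x)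

/-- `τ_x = ⟨x⟩ = (1+|x|²)^{1/2}` in coordinates `(u,x)` (the index `0` is `u`). -/
def tauX (p : Pt) : ℝ := Real.sqrt (1 + ∑ i : Fin 3, (p i.succ) ^ 2)

/-- `r = |x|`. -/
def rB (p : Pt) : ℝ := Real.sqrt (∑ i : Fin 3, (p i.succ) ^ 2)

/-- The reference tensor `h`: `h^{uu}=0`, `h^{ui}=h^{iu}=-ω^i`, `h^{ij}=δ^{ij}`,
where `ω^i = x^i/τ_x`. -/
def hmat (p : Pt) (α β : Fin 4) : ℝ :=
  if α = 0 then (if β = 0 then 0 else -(p β / tauX p))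
  else if β = 0 then -(p α / tauX p)
  else if α = β then 1 else 0

/-- `d^{1/2} g⁻¹ - h`. -/
def Mten (g : Pt → Matrix (Fin 4) (Fin 4) ℝ) (p : Pt) (α β : Fin 4) : ℝ :=
  Real.sqrt (adet g p) * ginv g p α β - hmat p α β

/-- Second-order operator `(∇_α R^{αβ} ∇_β)φ = |g|^{-1/2}∂_α(|g|^{1/2} R^{αβ} ∂_βφ)`. -/
def divForm (g : Pt → Matrix (Fin 4) (Fin 4) ℝ) (R : Pt → Fin 4 → Fin 4 → ℝ)
    (φ : Pt → ℝ) (x : Pt) : ℝ :=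
  (Real.sqrt (adet g x))⁻¹ *
    ∑ α : Fin 4, pd α (fun y => Real.sqrt (adet g y) * ∑ β : Fin 4, R y α β * pd β φ y) x

/-- The scaling vector field `S = u∂_u + x^i∂_i = x^α∂_α`. -/
def Svf : Fin 4 → Pt → ℝ := fun α q => q α

/-- The correction tensor `R₁` of Statement 9: `R₁^{iu} = R₁^{ui} = d^{-1/2}ω^iτ_x⁻²`. -/
def R1S (g : Pt → Matrix (Fin 4) (Fin 4) ℝ) (q : Pt) (α β : Fin 4) : ℝ :=
  if α = 0 ∧ β ≠ 0 then (Real.sqrt (adet g q))⁻¹ * (q β / tauX q) * ((tauX q) ^ 2)⁻¹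
  else if β = 0 ∧ α ≠ 0 then (Real.sqrt (adet g q))⁻¹ * (q α / tauX q) * ((tauX q) ^ 2)⁻¹
  else 0

/-!
Write `F = d^{1/2} g⁻¹`, so that `□_g = d^{-1/2} ∂_α F^{αβ} ∂_β`. Since `[∂_α, S] = ∂_α`, the
unweighted operator satisfies `[∂_α F^{αβ} ∂_β, S] = 2 ∂_α F^{αβ} ∂_β - ∂_α (S F^{αβ}) ∂_β`, and the
weight contributes `S(d^{-1/2}) = -½ d^{-1/2} S(ln d)`; this holds for any smooth `F` in place of
`d^{1/2} g⁻¹`. For the specific tensor `R`, `L_S M = S M - 2M` for every contravariant 2-tensor, and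
`S ω^i = ω^i τ_x⁻²` gives `S h = -d^{1/2} R₁`, hence `d^{1/2} R = -S(d^{1/2} g⁻¹)`.
-/

open Finset

section PartialDerivative

variable {f f₁ f₂ : Pt → ℝ} {p : Pt} {α β : Fin 4}

lemma pd_congr_nhds (h : f₁ =ᶠ[nhds p] f₂) : pd α f₁ p = pd α f₂ p := by
  rw [pd, pd, h.fderiv_eq]

lemma pd_const (c : ℝ) : pd α (fun _ => c) p = 0 := by
  simp [pd]

lemma pd_add (h₁ : DifferentiableAt ℝ f₁ p) (h₂ : DifferentiableAt ℝ f₂ p) :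
    pd α (fun y => f₁ y + f₂ y) p = pd α f₁ p + pd α f₂ p := by
  simp [pd, fderiv_fun_add h₁ h₂]

lemma pd_sub (h₁ : DifferentiableAt ℝ f₁ p) (h₂ : DifferentiableAt ℝ f₂ p) :
    pd α (fun y => f₁ y - f₂ y) p = pd α f₁ p - pd α f₂ p := by
  simp [pd, fderiv_fun_sub h₁ h₂]

lemma pd_neg : pd α (fun y => -f y) p = -pd α f p := by
  simp [pd, fderiv_fun_neg]

lemma pd_mul (h₁ : DifferentiableAt ℝ f₁ p) (h₂ : DifferentiableAt ℝ f₂ p) :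
    pd α (fun y => f₁ y * f₂ y) p = pd α f₁ p * f₂ p + f₁ p * pd α f₂ p := by
  simp [pd, fderiv_fun_mul h₁ h₂]
  ring

lemma pd_sum {ι : Type*} [Fintype ι] {F : ι → Pt → ℝ} (h : ∀ i, DifferentiableAt ℝ (F i) p) :
    pd α (fun y => ∑ i, F i y) p = ∑ i, pd α (F i) p := by
  simp [pd, fderiv_fun_sum fun i _ => h i]

lemma pd_coord : pd α (fun y : Pt => y β) p = if β = α then 1 else 0 := by
  simp [pd, (hasFDerivAt_apply β p).fderiv, Pi.single_apply]

lemma pd_comp_of_hasDerivAt {h : ℝ → ℝ} {h' : ℝ} (hf : DifferentiableAt ℝ f p)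
    (hh : HasDerivAt h h' (f p)) : pd α (fun y => h (f y)) p = h' * pd α f p := by
  have H : HasFDerivAt (fun y => h (f y)) (h' • fderiv ℝ f p) p :=
    hh.comp_hasFDerivAt p hf.hasFDerivAt
  simp [pd, H.fderiv]

lemma differentiableAt_pd (hf : ContDiffAt ℝ 2 f p) : DifferentiableAt ℝ (pd α f) p :=
  ((hf.fderiv_right (m := 1) (by norm_num)).differentiableAt (by norm_num)).clm_apply
    (differentiableAt_const _)

lemma pd_pd_comm (hf : ContDiffAt ℝ 2 f p) : pd α (pd β f) p = pd β (pd α f) p := by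
  have hd : DifferentiableAt ℝ (fderiv ℝ f) p :=
    (hf.fderiv_right (m := 1) (by norm_num)).differentiableAt (by norm_num)
  have hpd : ∀ γ δ : Fin 4, pd γ (pd δ f) p =
      fderiv ℝ (fderiv ℝ f) p (Pi.single γ 1) (Pi.single δ 1) := fun γ δ => by
    unfold pd
    rw [fderiv_clm_apply hd (differentiableAt_const _)]
    simp
  rw [hpd, hpd, hf.isSymmSndFDerivAt (by simp)]

end PartialDerivative

section Euler

variable {f f₁ f₂ : Pt → ℝ} {p : Pt} {α β : Fin 4}

lemma Xapp_Svf_apply : Xapp Svf f p = ∑ γ, p γ * pd γ f p := rfl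

lemma Xapp_Svf_add (h₁ : DifferentiableAt ℝ f₁ p) (h₂ : DifferentiableAt ℝ f₂ p) :
    Xapp Svf (fun y => f₁ y + f₂ y) p = Xapp Svf f₁ p + Xapp Svf f₂ p := by
  simp only [Xapp_Svf_apply, pd_add h₁ h₂, mul_add, sum_add_distrib]

lemma Xapp_Svf_sub (h₁ : DifferentiableAt ℝ f₁ p) (h₂ : DifferentiableAt ℝ f₂ p) :
    Xapp Svf (fun y => f₁ y - f₂ y) p = Xapp Svf f₁ p - Xapp Svf f₂ p := by
  simp only [Xapp_Svf_apply, pd_sub h₁ h₂, mul_sub, sum_sub_distrib]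

lemma Xapp_Svf_neg : Xapp Svf (fun y => -f y) p = -Xapp Svf f p := by
  simp only [Xapp_Svf_apply, pd_neg, mul_neg, sum_neg_distrib]

lemma Xapp_Svf_mul (h₁ : DifferentiableAt ℝ f₁ p) (h₂ : DifferentiableAt ℝ f₂ p) :
    Xapp Svf (fun y => f₁ y * f₂ y) p = Xapp Svf f₁ p * f₂ p + f₁ p * Xapp Svf f₂ p := by
  simp only [Xapp_Svf_apply, pd_mul h₁ h₂, mul_add, sum_add_distrib, sum_mul, mul_sum]
  congr 1 <;> exact sum_congr rfl fun _ _ => by ring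

lemma Xapp_Svf_sum {ι : Type*} [Fintype ι] {F : ι → Pt → ℝ}
    (h : ∀ i, DifferentiableAt ℝ (F i) p) :
    Xapp Svf (fun y => ∑ i, F i y) p = ∑ i, Xapp Svf (F i) p := by
  simp only [Xapp_Svf_apply, pd_sum h, mul_sum]
  exact sum_comm

lemma Xapp_Svf_comp_of_hasDerivAt {h : ℝ → ℝ} {h' : ℝ} (hf : DifferentiableAt ℝ f p)
    (hh : HasDerivAt h h' (f p)) : Xapp Svf (fun y => h (f y)) p = h' * Xapp Svf f p := by
  simp only [Xapp_Svf_apply, pd_comp_of_hasDerivAt hf hh, mul_sum]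
  exact sum_congr rfl fun _ _ => by ring

lemma Xapp_Svf_const (c : ℝ) : Xapp Svf (fun _ => c) p = 0 := by
  simp [Xapp_Svf_apply, pd_const]

lemma Xapp_Svf_coord : Xapp Svf (fun y : Pt => y β) p = p β := by
  simp [Xapp_Svf_apply, pd_coord]

lemma pd_Xapp_Svf (hf : ContDiffAt ℝ 2 f p) :
    pd α (Xapp Svf f) p = pd α f p + Xapp Svf (pd α f) p := by
  have hcoord : ∀ γ : Fin 4, DifferentiableAt ℝ (fun y : Pt => y γ) p := fun γ =>
    (hasFDerivAt_apply γ p).differentiableAt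
  rw [show Xapp Svf f = fun y => ∑ γ, y γ * pd γ f y from rfl,
    pd_sum (F := fun γ y => y γ * pd γ f y) fun γ => (hcoord γ).mul (differentiableAt_pd hf)]
  simp only [pd_mul (hcoord _) (differentiableAt_pd hf), pd_coord, ite_mul, one_mul, zero_mul,
    sum_add_distrib, sum_ite_eq', mem_univ, if_true, Xapp_Svf_apply, pd_pd_comm hf]

end Euler

section Smoothness

variable {U : Set Pt} {f : Pt → ℝ}

lemma contDiffOn_pd (hU : IsOpen U) (hf : ContDiffOn ℝ (⊤ : ℕ∞) f U) (α : Fin 4) :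
    ContDiffOn ℝ (⊤ : ℕ∞) (pd α f) U :=
  (hf.fderiv_of_isOpen hU le_rfl).clm_apply contDiffOn_const

lemma ContDiffOn.differentiableAt_of_mem (hU : IsOpen U) (hf : ContDiffOn ℝ (⊤ : ℕ∞) f U)
    {p : Pt} (hp : p ∈ U) : DifferentiableAt ℝ f p :=
  (hf.contDiffAt (hU.mem_nhds hp)).differentiableAt (by simp)

lemma ContDiffOn.contDiffAt_two (hU : IsOpen U) (hf : ContDiffOn ℝ (⊤ : ℕ∞) f U) {p : Pt}
    (hp : p ∈ U) : ContDiffAt ℝ 2 f p :=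
  (hf.contDiffAt (hU.mem_nhds hp)).of_le (WithTop.coe_le_coe.2 le_top)

lemma contDiffOn_Xapp_Svf (hU : IsOpen U) (hf : ContDiffOn ℝ (⊤ : ℕ∞) f U) :
    ContDiffOn ℝ (⊤ : ℕ∞) (Xapp Svf f) U :=
  ContDiffOn.sum fun γ _ => (contDiff_apply ℝ ℝ γ).contDiffOn.mul (contDiffOn_pd hU hf γ)

end Smoothness

def flux (F : Fin 4 → Fin 4 → Pt → ℝ) (φ : Pt → ℝ) (α : Fin 4) (y : Pt) : ℝ :=
  ∑ β, F α β y * pd β φ y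

def divOp (F : Fin 4 → Fin 4 → Pt → ℝ) (φ : Pt → ℝ) (y : Pt) : ℝ :=
  ∑ α, pd α (flux F φ α) y

section DivergenceForm

variable {U : Set Pt} {F : Fin 4 → Fin 4 → Pt → ℝ} {φ : Pt → ℝ} {p : Pt}

lemma divOp_neg : divOp (fun α β y => -F α β y) φ p = -divOp F φ p := by
  have hflux : ∀ α, flux (fun α β y => -F α β y) φ α = fun y => -flux F φ α y := fun α =>
    funext fun y => by simp only [flux, neg_mul, sum_neg_distrib]
  simp only [divOp, hflux, pd_neg, sum_neg_distrib]

lemma divOp_congr {G : Fin 4 → Fin 4 → Pt → ℝ} (h : ∀ α β, F α β =ᶠ[nhds p] G α β) :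
    divOp F φ p = divOp G φ p := by
  refine sum_congr rfl fun α _ => pd_congr_nhds ?_
  filter_upwards [Filter.eventually_all.2 (h α)] with y hy
  simp only [flux, hy]

lemma contDiffOn_flux (hU : IsOpen U) (hF : ∀ α β, ContDiffOn ℝ (⊤ : ℕ∞) (F α β) U)
    (hφ : ContDiffOn ℝ (⊤ : ℕ∞) φ U) (α : Fin 4) : ContDiffOn ℝ (⊤ : ℕ∞) (flux F φ α) U :=
  ContDiffOn.sum fun β _ => (hF α β).mul (contDiffOn_pd hU hφ β)

lemma contDiffOn_divOp (hU : IsOpen U) (hF : ∀ α β, ContDiffOn ℝ (⊤ : ℕ∞) (F α β) U)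
    (hφ : ContDiffOn ℝ (⊤ : ℕ∞) φ U) : ContDiffOn ℝ (⊤ : ℕ∞) (divOp F φ) U :=
  ContDiffOn.sum fun α _ => contDiffOn_pd hU (contDiffOn_flux hU hF hφ α) α

end DivergenceForm

section Commutator

variable {U : Set Pt} {F : Fin 4 → Fin 4 → Pt → ℝ} {φ : Pt → ℝ} {p : Pt}

lemma flux_Xapp_Svf_sub_Xapp_Svf_flux {α : Fin 4} (hF : ∀ β, DifferentiableAt ℝ (F α β) p)
    (hφ : ContDiffAt ℝ 2 φ p) :
    flux F (Xapp Svf φ) α p - Xapp Svf (flux F φ α) p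
      = flux F φ α p - flux (fun α β => Xapp Svf (F α β)) φ α p := by
  have hsum : Xapp Svf (flux F φ α) p = ∑ β, Xapp Svf (fun y => F α β y * pd β φ y) p :=
    Xapp_Svf_sum fun β => (hF β).mul (differentiableAt_pd hφ)
  simp only [hsum, flux, Xapp_Svf_mul (hF _) (differentiableAt_pd hφ), pd_Xapp_Svf hφ,
    ← sum_sub_distrib]
  exact sum_congr rfl fun _ _ => by ring

lemma divOp_Xapp_Svf_sub_Xapp_Svf_divOp (hU : IsOpen U)
    (hF : ∀ α β, ContDiffOn ℝ (⊤ : ℕ∞) (F α β) U) (hφ : ContDiffOn ℝ (⊤ : ℕ∞) φ U) (hp : p ∈ U) :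
    divOp F (Xapp Svf φ) p - Xapp Svf (divOp F φ) p
      = 2 * divOp F φ p - divOp (fun α β => Xapp Svf (F α β)) φ p := by
  have hSF : ∀ α β, ContDiffOn ℝ (⊤ : ℕ∞) (Xapp Svf (F α β)) U := fun α β =>
    contDiffOn_Xapp_Svf hU (hF α β)
  have hG := contDiffOn_flux hU hF hφ
  have key : ∀ α, pd α (flux F (Xapp Svf φ) α) p - Xapp Svf (pd α (flux F φ α)) p
      = 2 * pd α (flux F φ α) p - pd α (flux (fun α β => Xapp Svf (F α β)) φ α) p := by
    intro α
    have hcomm : (fun y => flux F (Xapp Svf φ) α y - Xapp Svf (flux F φ α) y)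
        =ᶠ[nhds p] fun y => flux F φ α y - flux (fun α β => Xapp Svf (F α β)) φ α y := by
      filter_upwards [hU.mem_nhds hp] with y hy
      exact flux_Xapp_Svf_sub_Xapp_Svf_flux
        (fun β => (hF α β).differentiableAt_of_mem hU hy) (hφ.contDiffAt_two hU hy)
    have h := pd_congr_nhds (α := α) hcomm
    rw [pd_sub
        ((contDiffOn_flux hU hF (contDiffOn_Xapp_Svf hU hφ) α).differentiableAt_of_mem hU hp)
        ((contDiffOn_Xapp_Svf hU (hG α)).differentiableAt_of_mem hU hp),
      pd_sub ((hG α).differentiableAt_of_mem hU hp)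
        ((contDiffOn_flux hU hSF hφ α).differentiableAt_of_mem hU hp),
      pd_Xapp_Svf ((hG α).contDiffAt_two hU hp)] at h
    linarith
  have hsum : Xapp Svf (divOp F φ) p = ∑ α, Xapp Svf (pd α (flux F φ α)) p :=
    Xapp_Svf_sum fun α => (contDiffOn_pd hU (hG α) α).differentiableAt_of_mem hU hp
  rw [hsum, divOp, divOp, divOp, mul_sum, ← sum_sub_distrib, ← sum_sub_distrib]
  exact sum_congr rfl fun α _ => key α

end Commutator

section WeightedDivergenceForm

variable {U : Set Pt} {g : Pt → Matrix (Fin 4) (Fin 4) ℝ} {R R' : Pt → Fin 4 → Fin 4 → ℝ}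
  {φ : Pt → ℝ} {p : Pt}

lemma boxg_eq_divForm : boxg g φ = divForm g (fun y => ginv g y) φ := rfl

lemma divForm_eq_divOp (y : Pt) :
    divForm g R φ y
      = (Real.sqrt (adet g y))⁻¹ * divOp (fun α β z => Real.sqrt (adet g z) * R z α β) φ y := by
  rw [divForm, divOp, mul_sum, mul_sum]
  refine sum_congr rfl fun α _ => congrArg _ (congrArg (pd α · y) (funext fun z => ?_))
  simp only [flux, mul_sum, mul_assoc]

lemma Xapp_Svf_inv_sqrt {d : Pt → ℝ} (hd : DifferentiableAt ℝ d p) (hpos : 0 < d p) :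
    Xapp Svf (fun y => (Real.sqrt (d y))⁻¹) p
      = -(1 / 2) * (Real.sqrt (d p))⁻¹ * Xapp Svf (fun y => Real.log (d y)) p := by
  have hsqrt : Real.sqrt (d p) ≠ 0 := (Real.sqrt_pos.2 hpos).ne'
  rw [Xapp_Svf_comp_of_hasDerivAt (h := fun t => (Real.sqrt t)⁻¹) hd
      ((Real.hasDerivAt_sqrt hpos.ne').inv hsqrt),
    Xapp_Svf_comp_of_hasDerivAt hd (Real.hasDerivAt_log hpos.ne')]
  have hsq : Real.sqrt (d p) ^ 2 = d p := Real.sq_sqrt hpos.le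
  field_simp
  rw [hsq]
  ring

lemma divForm_Xapp_Svf_sub_Xapp_Svf_divForm (hU : IsOpen U)
    (hd : ContDiffOn ℝ (⊤ : ℕ∞) (adet g) U) (hd0 : ∀ y ∈ U, 0 < adet g y)
    (hR : ∀ α β, ContDiffOn ℝ (⊤ : ℕ∞) (fun y => R y α β) U)
    (hR' : ∀ y ∈ U, ∀ α β,
      Real.sqrt (adet g y) * R' y α β = -Xapp Svf (fun z => Real.sqrt (adet g z) * R z α β) y)
    (hφ : ContDiffOn ℝ (⊤ : ℕ∞) φ U) (hp : p ∈ U) :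
    divForm g R (Xapp Svf φ) p - Xapp Svf (divForm g R φ) p
      = divForm g R' φ p
        + (1 / 2) * (4 + Xapp Svf (fun y => Real.log (adet g y)) p) * divForm g R φ p := by
  set F : Fin 4 → Fin 4 → Pt → ℝ := fun α β z => Real.sqrt (adet g z) * R z α β
  have hw : ContDiffOn ℝ (⊤ : ℕ∞) (fun y => Real.sqrt (adet g y)) U :=
    hd.sqrt fun y hy => (hd0 y hy).ne'
  have hF : ∀ α β, ContDiffOn ℝ (⊤ : ℕ∞) (F α β) U := fun α β => hw.mul (hR α β)
  have hwp : Real.sqrt (adet g p) ≠ 0 := (Real.sqrt_pos.2 (hd0 p hp)).ne'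
  have hS : Xapp Svf (divForm g R φ) p
      = -(1 / 2) * (Real.sqrt (adet g p))⁻¹ * Xapp Svf (fun y => Real.log (adet g y)) p
          * divOp F φ p + (Real.sqrt (adet g p))⁻¹ * Xapp Svf (divOp F φ) p := by
    rw [show divForm g R φ = fun y => (Real.sqrt (adet g y))⁻¹ * divOp F φ y from
        funext divForm_eq_divOp,
      Xapp_Svf_mul (f₁ := fun y => (Real.sqrt (adet g y))⁻¹)
        ((hw.differentiableAt_of_mem hU hp).inv hwp)
        ((contDiffOn_divOp hU hF hφ).differentiableAt_of_mem hU hp),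
      Xapp_Svf_inv_sqrt (hd.differentiableAt_of_mem hU hp) (hd0 p hp)]
  have hR'F : divForm g R' φ p = -((Real.sqrt (adet g p))⁻¹
      * divOp (fun α β => Xapp Svf (F α β)) φ p) := by
    rw [divForm_eq_divOp, ← mul_neg, ← divOp_neg]
    refine congrArg _ (divOp_congr fun α β => ?_)
    filter_upwards [hU.mem_nhds hp] with y hy
    exact hR' y hy α β
  rw [hS, hR'F, divForm_eq_divOp, divForm_eq_divOp]
  linear_combination (Real.sqrt (adet g p))⁻¹ * divOp_Xapp_Svf_sub_Xapp_Svf_divOp hU hF hφ hp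

end WeightedDivergenceForm

section ReferenceTensor

variable {y : Pt} {α β : Fin 4}

lemma one_add_sum_sq_pos (y : Pt) : 0 < 1 + ∑ i : Fin 3, y i.succ ^ 2 := by
  positivity

lemma tauX_pos (y : Pt) : 0 < tauX y :=
  Real.sqrt_pos.2 (one_add_sum_sq_pos y)

lemma differentiableAt_tauX : DifferentiableAt ℝ tauX y :=
  (DifferentiableAt.sqrt (by fun_prop) (one_add_sum_sq_pos y).ne')

lemma Xapp_Svf_tauX : Xapp Svf tauX y = (tauX y ^ 2 - 1) / tauX y := by
  have hq : Xapp Svf (fun z : Pt => 1 + ∑ i : Fin 3, z i.succ ^ 2) y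
      = 2 * ∑ i : Fin 3, y i.succ ^ 2 := by
    rw [Xapp_Svf_add (by fun_prop) (by fun_prop), Xapp_Svf_const, zero_add,
      Xapp_Svf_sum fun i => by fun_prop, mul_sum]
    refine sum_congr rfl fun i _ => ?_
    rw [Xapp_Svf_comp_of_hasDerivAt (h := fun t => t ^ 2) (by fun_prop) (hasDerivAt_pow 2 _),
      Xapp_Svf_coord]
    ring
  have hsq : tauX y ^ 2 = 1 + ∑ i : Fin 3, y i.succ ^ 2 := Real.sq_sqrt (one_add_sum_sq_pos y).le
  have hS : Xapp Svf tauX y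
      = 1 / (2 * tauX y) * Xapp Svf (fun z : Pt => 1 + ∑ i : Fin 3, z i.succ ^ 2) y :=
    Xapp_Svf_comp_of_hasDerivAt (by fun_prop) (Real.hasDerivAt_sqrt (one_add_sum_sq_pos y).ne')
  rw [hS, hq, hsq]
  have := (tauX_pos y).ne'
  field_simp
  ring

lemma differentiableAt_coord_div_tauX (j : Fin 4) :
    DifferentiableAt ℝ (fun z : Pt => z j / tauX z) y := by
  have := differentiableAt_tauX (y := y)
  fun_prop (disch := exact (tauX_pos y).ne')

lemma Xapp_Svf_coord_div_tauX (j : Fin 4) :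
    Xapp Svf (fun z : Pt => z j / tauX z) y = y j / tauX y ^ 3 := by
  have hτ := (tauX_pos y).ne'
  simp only [div_eq_mul_inv]
  rw [Xapp_Svf_mul (f₂ := fun z => (tauX z)⁻¹) (hasFDerivAt_apply j y).differentiableAt
      (differentiableAt_tauX.inv hτ), Xapp_Svf_coord,
    Xapp_Svf_comp_of_hasDerivAt differentiableAt_tauX (hasDerivAt_inv hτ), Xapp_Svf_tauX]
  field_simp
  ring

lemma differentiableAt_hmat : DifferentiableAt ℝ (fun z => hmat z α β) y := by
  by_cases hα : α = 0 <;> by_cases hβ : β = 0 <;>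
    simp only [hmat, hα, hβ, if_true, if_false]
  exacts [differentiableAt_const _, (differentiableAt_coord_div_tauX β).neg,
    (differentiableAt_coord_div_tauX α).neg, differentiableAt_const _]

lemma Xapp_Svf_hmat {g : Pt → Matrix (Fin 4) (Fin 4) ℝ} (hy : 0 < adet g y) :
    Xapp Svf (fun z => hmat z α β) y = -(Real.sqrt (adet g y) * R1S g y α β) := by
  have hτ := (tauX_pos y).ne'
  have hd := (Real.sqrt_pos.2 hy).ne'
  by_cases hα : α = 0 <;> by_cases hβ : β = 0 <;>
    simp only [hmat, R1S, hα, hβ, ne_eq, not_true_eq_false, not_false_eq_true, and_true,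
      and_false, if_true, if_false]
  all_goals
    simp only [Xapp_Svf_const, Xapp_Svf_neg, Xapp_Svf_coord_div_tauX, mul_zero, neg_zero]
  all_goals field_simp

end ReferenceTensor

section MetricSmoothness

variable {U : Set Pt} {n : WithTop ℕ∞}

lemma contDiffOn_det {M : Pt → Matrix (Fin 4) (Fin 4) ℝ}
    (hM : ∀ i j, ContDiffOn ℝ n (fun y => M y i j) U) :
    ContDiffOn ℝ n (fun y => (M y).det) U := by
  simp only [Matrix.det_apply']
  exact ContDiffOn.sum fun σ _ => contDiffOn_const.mul (contDiffOn_prod fun i _ => hM (σ i) i)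

variable {g : Pt → Matrix (Fin 4) (Fin 4) ℝ}

lemma IsMetricOn.adet_pos (hg : IsMetricOn g U) {y : Pt} (hy : y ∈ U) : 0 < adet g y :=
  abs_pos.2 (hg.det_ne y hy)

lemma IsMetricOn.contDiffOn_adet (hg : IsMetricOn g U) (hU : IsOpen U) :
    ContDiffOn ℝ (⊤ : ℕ∞) (adet g) U :=
  hU.contDiffOn_iff.2 fun _ hy =>
    ((contDiffOn_det hg.smooth).contDiffAt (hU.mem_nhds hy)).abs (hg.det_ne _ hy)

lemma IsMetricOn.contDiffOn_ginv (hg : IsMetricOn g U) (α β : Fin 4) :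
    ContDiffOn ℝ (⊤ : ℕ∞) (fun y => ginv g y α β) U := by
  have hcramer : (fun y => ginv g y α β)
      = fun y => ((g y).det)⁻¹ * ((g y).updateRow β (Pi.single α 1)).det := by
    funext y
    simp [ginv, Matrix.inv_def, Matrix.adjugate_apply, Ring.inverse_eq_inv']
  rw [hcramer]
  refine ((contDiffOn_det hg.smooth).inv hg.det_ne).mul (contDiffOn_det fun i j => ?_)
  by_cases hi : i = β
  · simp only [hi, Matrix.updateRow_self]
    exact contDiffOn_const
  · simp only [Matrix.updateRow_ne hi]
    exact hg.smooth i j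

end MetricSmoothness

section CommutatorTensor

variable {y : Pt} {α β : Fin 4}

lemma lieT_Svf (R : Pt → Fin 4 → Fin 4 → ℝ) :
    lieT Svf R y α β = Xapp Svf (fun z => R z α β) y - 2 * R y α β := by
  have hS : ∀ δ γ : Fin 4, pd γ (Svf δ) y = if δ = γ then 1 else 0 := fun _ _ => pd_coord
  rw [Xapp_Svf_apply]
  simp only [lieT, hS, mul_ite, mul_one, mul_zero, sum_ite_eq, mem_univ, if_true, Svf]
  ring

lemma sqrt_adet_mul_commutatorTensor {g : Pt → Matrix (Fin 4) (Fin 4) ℝ} (hy : 0 < adet g y)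
    (hF : DifferentiableAt ℝ (fun z => Real.sqrt (adet g z) * ginv g z α β) y) :
    Real.sqrt (adet g y) * (-((Real.sqrt (adet g y))⁻¹ * lieT Svf (Mten g) y α β)
        - 2 * (Real.sqrt (adet g y))⁻¹ * Mten g y α β + R1S g y α β)
      = -Xapp Svf (fun z => Real.sqrt (adet g z) * ginv g z α β) y := by
  have hM : Xapp Svf (fun z => Mten g z α β) y
      = Xapp Svf (fun z => Real.sqrt (adet g z) * ginv g z α β) y
        - Xapp Svf (fun z => hmat z α β) y :=
    Xapp_Svf_sub hF differentiableAt_hmat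
  have hd := (Real.sqrt_pos.2 hy).ne'
  rw [lieT_Svf, hM, Xapp_Svf_hmat hy]
  field_simp
  ring

end CommutatorTensor

/-- the commutator formula for the scaling vector field `S`:
`[□_g,S]φ = (∇_αR^{αβ}∇_β)φ + (1/2)(4 + S ln d)□_gφ`,
`R = -d^{-1/2}L_S(d^{1/2}g⁻¹-h) - 2d^{-1/2}(d^{1/2}g⁻¹-h) + R₁`. -/
theorem box_commutator_scaling
    (U : Set Pt) (hU : IsOpen U)
    (g : Pt → Matrix (Fin 4) (Fin 4) ℝ) (hg : IsMetricOn g U)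
    (φ : Pt → ℝ) (hφ : ContDiffOn ℝ (⊤ : ℕ∞) φ U) :
    ∀ p ∈ U,
      boxg g (Xapp Svf φ) p - Xapp Svf (boxg g φ) p
        = divForm g
            (fun y α β =>
              -((Real.sqrt (adet g y))⁻¹ * lieT Svf (Mten g) y α β)
                - 2 * (Real.sqrt (adet g y))⁻¹ * Mten g y α β
                + R1S g y α β) φ p
          + (1/2) * (4 + Xapp Svf (fun y => Real.log (adet g y)) p) * boxg g φ p := by
  intro p hp
  have hd := hg.contDiffOn_adet hU
  have hF : ∀ y ∈ U, ∀ α β : Fin 4,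
      DifferentiableAt ℝ (fun z => Real.sqrt (adet g z) * ginv g z α β) y := fun y hy α β =>
    ((hd.sqrt fun z hz => (hg.adet_pos hz).ne').mul
      (hg.contDiffOn_ginv α β)).differentiableAt_of_mem hU hy
  rw [boxg_eq_divForm, boxg_eq_divForm]
  exact divForm_Xapp_Svf_sub_Xapp_Svf_divForm hU hd (fun y hy => hg.adet_pos hy)
    hg.contDiffOn_ginv
    (fun y hy α β => sqrt_adet_mul_commutatorTensor (hg.adet_pos hy) (hF y hy α β)) hφ hp
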